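/- Let (F_1, F_2) be a Nash equilibrium of the single-item all-pay auction with parameters (B_1, B_2, v_1, v_2), and suppose that for some player i, inf Supp(F_i) < sup Supp(F_i) while inf Supp(F_{3−i}) = sup Supp(F_{3−i}). Then Supp(F_i) = {0, L}, the probability that player i bids 0 satisfies F_i({0}) ≤ 1 − 2L/v_{3−i}, player i's expected equilibrium utility is 0, and player (3−i)'s expected equilibrium utility is at most v_{3−i} − 2L. -/

import Mathlib

/-!
Against a pure bid `b`, player `i`'s payoff is `-x` for bids `x < b` and `v i - x` for `x > b`.
A bid above `b` is dominated by a cheaper bid that still wins, and below `b` only the free bid `0`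
can match the equilibrium utility, which is at least the payoff of bidding `0`. So a randomizing
best response is supported on exactly `{0, b}`, his utility is `0`, and the tie at `b` pays
`winProb i b b * v i = b`. The opponent, bidding just above `0`, secures nearly
`F i {0} * v (1 - i)`; comparing this with his utility from the tie forces the tie to be a fair
coin. Hence `v i = 2 * b`, so player `i` must be unable to outbid `b`, which gives `B i = b = L`.
-/

open MeasureTheory Set

noncomputable section

/-- `L = min {B₁, B₂, v₁, v₂}` for the single-item auction. -/
def Lval (B v : Fin 2 → ℝ) : ℝ := min (min (B 0) (B 1)) (min (v 0) (v 1))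

/-- Probability that player `i` wins the single item when bidding `xi` while the
opponent bids `xo`: the strictly higher bid wins; on a tie at
`min {B₁, B₂, v₁, v₂}` the player with the strictly larger `min {Bᵢ, vᵢ}` wins,
and all other ties are resolved by a fair coin. -/
def winProb (B v : Fin 2 → ℝ) (i : Fin 2) (xi xo : ℝ) : ℝ :=
  if xo < xi then 1
  else if xi < xo then 0
  else if xi = Lval B v ∧ min (B (1 - i)) (v (1 - i)) < min (B i) (v i) then 1
  else if xi = Lval B v ∧ min (B i) (v i) < min (B (1 - i)) (v (1 - i)) then 0
  else 1 / 2

/-- Expected utility of player `i` from the pure bids `xi` (own) and `xo` (opponent):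
he pays his bid in any case and receives `v i` with his winning probability. -/
def payoff (B v : Fin 2 → ℝ) (i : Fin 2) (xi xo : ℝ) : ℝ :=
  winProb B v i xi xo * v i - xi

/-- A mixed strategy of a player with budget `Bi`: a probability measure on `[0, Bi]`. -/
def IsStrategy (Bi : ℝ) (μ : Measure ℝ) : Prop :=
  IsProbabilityMeasure μ ∧ μ (Icc 0 Bi) = 1

/-- Expected utility of player `i` when he plays `μ` and the opponent plays `ν`. -/
def expUtil (B v : Fin 2 → ℝ) (i : Fin 2) (μ ν : Measure ℝ) : ℝ :=
  ∫ xi, (∫ xo, payoff B v i xi xo ∂ν) ∂μ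

/-- `(F 0, F 1)` is a (mixed) Nash equilibrium of the single-item all-pay auction. -/
def IsNash (B v : Fin 2 → ℝ) (F : Fin 2 → Measure ℝ) : Prop :=
  (∀ i, IsStrategy (B i) (F i)) ∧
  ∀ i, ∀ μ, IsStrategy (B i) μ →
    expUtil B v i μ (F (1 - i)) ≤ expUtil B v i (F i) (F (1 - i))

/-- The (topological) support of a mixed strategy. -/
def supp (μ : Measure ℝ) : Set ℝ := {x | ∀ U ∈ nhds x, μ U ≠ 0}

theorem Set.Nonempty.exists_lt_of_csInf_lt_csSup {α : Type*} [ConditionallyCompleteLinearOrder α]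
    {s : Set α} (hs : s.Nonempty) (h : sInf s < sSup s) : ∃ x ∈ s, ∃ y ∈ s, x < y := by
  obtain ⟨y, hy, hlt⟩ := exists_lt_of_lt_csSup hs h
  obtain ⟨x, hx, hxy⟩ := exists_lt_of_csInf_lt hs hlt
  exact ⟨x, hx, y, hy, hxy⟩

theorem eq_csInf_of_csInf_eq_csSup {α : Type*} [ConditionallyCompleteLattice α] {s : Set α}
    (hb : BddBelow s) (ha : BddAbove s) (h : sInf s = sSup s) {x : α} (hx : x ∈ s) :
    x = sInf s :=
  le_antisymm (h ▸ le_csSup ha hx) (csInf_le hb hx)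

section FiniteSupport

variable {α : Type*} [MeasurableSpace α] [MeasurableSingletonClass α] {μ : Measure α}

theorem integral_eq_sum_of_measure_compl_eq_zero [IsFiniteMeasure μ] (s : Finset α)
    (hs : μ (↑s)ᶜ = 0) (g : α → ℝ) : ∫ x, g x ∂μ = ∑ x ∈ s, μ.real {x} * g x := by
  have hint : ∀ t : Finset α, IntegrableOn g t μ := by
    classical
    intro t
    induction t using Finset.induction_on with
    | empty => simp
    | insert a t _ ih =>
      rw [Finset.coe_insert, insert_eq]
      exact IntegrableOn.union integrableOn_singleton ih
  have hμ : μ.restrict s = μ := Measure.restrict_eq_self_of_ae_mem (ae_iff.2 hs)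
  conv_lhs => rw [← hμ]
  exact setIntegral_finset s (hint s)

variable [IsProbabilityMeasure μ]

theorem integral_eq_of_measure_compl_singleton_eq_zero {a : α} (h : μ {a}ᶜ = 0) (g : α → ℝ) :
    ∫ x, g x ∂μ = g a := by
  rw [integral_eq_sum_of_measure_compl_eq_zero {a} (by simpa using h), Finset.sum_singleton,
    measureReal_def, (prob_compl_eq_zero_iff (measurableSet_singleton a)).1 h]
  simp

theorem integral_eq_of_measure_compl_pair_eq_zero {a c : α} (hac : a ≠ c) (h : μ {a, c}ᶜ = 0)
    (g : α → ℝ) : ∫ x, g x ∂μ = μ.real {a} * g a + (1 - μ.real {a}) * g c := by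
  classical
  have hsum (g : α → ℝ) : ∫ x, g x ∂μ = μ.real {a} * g a + μ.real {c} * g c := by
    rw [integral_eq_sum_of_measure_compl_eq_zero {a, c} (by simpa using h),
      Finset.sum_pair hac]
  have hone : μ.real {a} + μ.real {c} = 1 := by simpa using (hsum fun _ => 1).symm
  rw [hsum, ← hone]
  ring

end FiniteSupport

theorem support_subset_closure_setOf_eq_integral {α : Type*} [TopologicalSpace α]
    [MeasurableSpace α] {μ : Measure α} [IsProbabilityMeasure μ] {s : Set α} {g : α → ℝ}
    (hs : ∀ᵐ x ∂μ, x ∈ s) (hg : Integrable g μ) (hle : ∀ x ∈ s, g x ≤ ∫ y, g y ∂μ) :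
    μ.support ⊆ closure {x ∈ s | g x = ∫ y, g y ∂μ} := by
  refine Measure.support_subset_of_isClosed isClosed_closure ?_
  have hae := (integral_eq_iff_of_ae_le hg (integrable_const (∫ y, g y ∂μ)) (hs.mono hle)).1
    (by simp)
  filter_upwards [hs, hae] with x hxs hx
  exact subset_closure ⟨hxs, hx⟩

theorem supp_eq_support (μ : Measure ℝ) : supp μ = μ.support := by
  ext x
  simp only [supp, mem_ofPred_eq, Measure.mem_support_iff_forall, pos_iff_ne_zero]

section Strategy

variable {Bi : ℝ} {μ : Measure ℝ}

theorem IsStrategy.ae_mem (h : IsStrategy Bi μ) : ∀ᵐ x ∂μ, x ∈ Icc 0 Bi :=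
  have := h.1
  (prob_compl_eq_zero_iff measurableSet_Icc).2 h.2

theorem IsStrategy.supp_subset (h : IsStrategy Bi μ) : supp μ ⊆ Icc 0 Bi :=
  supp_eq_support μ ▸ Measure.support_subset_of_isClosed isClosed_Icc h.ae_mem

theorem IsStrategy.supp_nonempty (h : IsStrategy Bi μ) : (supp μ).Nonempty :=
  have := h.1
  supp_eq_support μ ▸ Measure.nonempty_support (IsProbabilityMeasure.ne_zero μ)

theorem IsStrategy.supp_eq_singleton_of_csInf_eq_csSup (h : IsStrategy Bi μ)
    (heq : sInf (supp μ) = sSup (supp μ)) : supp μ = {sInf (supp μ)} :=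
  h.supp_nonempty.subset_singleton_iff.1 fun _ hx =>
    eq_csInf_of_csInf_eq_csSup (bddBelow_Icc.mono h.supp_subset)
      (bddAbove_Icc.mono h.supp_subset) heq hx

theorem measure_compl_of_supp_eq {s : Set ℝ} (h : supp μ = s) : μ sᶜ = 0 :=
  h ▸ supp_eq_support μ ▸ Measure.measure_compl_support

end Strategy

section Auction

variable {B v : Fin 2 → ℝ} {F : Fin 2 → Measure ℝ} {i : Fin 2} {b u x y : ℝ}

theorem le_Lval (hBi : x ≤ B i) (hvi : x ≤ v i) (hBo : x ≤ B (1 - i)) (hvo : x ≤ v (1 - i)) :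
    x ≤ Lval B v := by
  fin_cases i <;> simp_all [Lval]

theorem Lval_le_budget : Lval B v ≤ B i := by
  fin_cases i <;> simp [Lval]

theorem winProb_of_lt (h : y < x) : winProb B v i x y = 1 := if_pos h

theorem winProb_of_gt (h : x < y) : winProb B v i x y = 0 := by
  rw [winProb, if_neg h.not_gt, if_pos h]

theorem winProb_nonneg : 0 ≤ winProb B v i x y := by
  unfold winProb; split_ifs <;> norm_num

theorem winProb_le_one : winProb B v i x y ≤ 1 := by
  unfold winProb; split_ifs <;> norm_num

theorem winProb_swap : winProb B v (1 - i) y x = 1 - winProb B v i x y := by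
  unfold winProb
  rw [sub_sub_cancel]
  generalize min (B i) (v i) = c, min (B (1 - i)) (v (1 - i)) = a, Lval B v = L
  split_ifs <;> grind

theorem winProb_self_eq_half (h0 : winProb B v i x x ≠ 0) (h1 : winProb B v i x x ≠ 1) :
    winProb B v i x x = 1 / 2 := by
  unfold winProb at *
  split_ifs at * <;> simp_all

theorem monotone_winProb_left : Monotone fun x => winProb B v i x y := by
  intro x x' hxx'
  rcases hxx'.lt_or_eq with h | rfl
  · show winProb B v i x y ≤ winProb B v i x' y
    rcases lt_or_ge y x' with hy | hy
    · exact (winProb_of_lt hy).symm ▸ winProb_le_one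
    · exact (winProb_of_gt (h.trans_le hy)).symm ▸ winProb_nonneg
  · rfl

theorem payoff_of_lt (h : y < x) : payoff B v i x y = v i - x := by
  rw [payoff, winProb_of_lt h, one_mul]

theorem payoff_of_gt (h : x < y) : payoff B v i x y = -x := by
  rw [payoff, winProb_of_gt h, zero_mul, zero_sub]

theorem payoff_zero_nonneg (hv : 0 ≤ v i) : 0 ≤ payoff B v i 0 y := by
  rw [payoff, sub_zero]
  exact mul_nonneg winProb_nonneg hv

theorem measurable_payoff_left : Measurable fun x => payoff B v i x y :=
  (monotone_winProb_left.measurable.mul_const _).sub measurable_id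

theorem abs_payoff_le (hv : 0 ≤ v i) : |payoff B v i x y| ≤ v i + |x| := by
  have h0 : (0 : ℝ) ≤ winProb B v i x y := winProb_nonneg
  have h1 : winProb B v i x y ≤ 1 := winProb_le_one
  rw [payoff, abs_le]
  constructor <;> nlinarith [abs_nonneg x, le_abs_self x, neg_abs_le x]

theorem setOf_payoff_eq_subset : {x | payoff B v i x b = u} ⊆ {-u, b, v i - u} := by
  intro x hx
  rw [mem_ofPred_eq] at hx
  rcases lt_trichotomy x b with h | rfl | h
  · rw [payoff_of_gt h] at hx
    exact Or.inl (by linarith)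
  · exact Or.inr (Or.inl rfl)
  · rw [payoff_of_lt h] at hx
    exact Or.inr (Or.inr (by rw [mem_singleton_iff]; linarith))

theorem eq_zero_or_eq_of_payoff_eq_max (hv : 0 ≤ v i) (hb : 0 ≤ b)
    (hmax : ∀ z ∈ Icc 0 (B i), payoff B v i z b ≤ u) (hx : x ∈ Icc 0 (B i))
    (hxu : payoff B v i x b = u) : x = 0 ∨ x = b := by
  rcases lt_trichotomy x b with h | h | h
  · have hu : 0 ≤ u := (payoff_zero_nonneg hv).trans (hmax 0 ⟨le_rfl, hx.1.trans hx.2⟩)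
    rw [payoff_of_gt h] at hxu
    exact Or.inl (by linarith [hx.1])
  · exact Or.inr h
  · have hm := hmax ((b + x) / 2) ⟨by linarith [hx.1], by linarith [hx.2]⟩
    rw [payoff_of_lt (by linarith)] at hm
    rw [payoff_of_lt h] at hxu
    linarith

theorem budget_le_of_payoff_le (hb : 0 ≤ b) (hmax : ∀ z ∈ Icc 0 (B i), payoff B v i z b ≤ u)
    (hu : u < v i - b) : B i ≤ b := by
  by_contra! hB
  have hbz : b < min (B i) ((b + (v i - u)) / 2) := lt_min hB (by linarith)
  have hz := hmax _ ⟨by linarith, min_le_left _ _⟩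
  rw [payoff_of_lt hbz] at hz
  linarith [min_le_right (B i) ((b + (v i - u)) / 2)]

theorem IsStrategy.integrable_payoff_left {μ : Measure ℝ} (h : IsStrategy (B i) μ)
    (hv : 0 ≤ v i) : Integrable (fun x => payoff B v i x y) μ := by
  have := h.1
  refine Integrable.mono' (integrable_const (v i + B i))
    measurable_payoff_left.aestronglyMeasurable ?_
  filter_upwards [h.ae_mem] with x hx
  calc |payoff B v i x y| ≤ v i + |x| := abs_payoff_le hv
    _ = v i + x := by rw [abs_of_nonneg hx.1]
    _ ≤ v i + B i := by linarith [hx.2]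

theorem expUtil_eq_of_pure {μ ν : Measure ℝ} [IsProbabilityMeasure ν] (h : ν {b}ᶜ = 0) :
    expUtil B v i μ ν = ∫ x, payoff B v i x b ∂μ :=
  integral_congr_ae (ae_of_all _ fun _ => integral_eq_of_measure_compl_singleton_eq_zero h _)

theorem expUtil_eq_of_pure_of_pair {μ ν : Measure ℝ} [IsProbabilityMeasure μ]
    [IsProbabilityMeasure ν] (hb : 0 < b) (hμ : μ {b}ᶜ = 0) (hν : ν {0, b}ᶜ = 0) :
    expUtil B v i μ ν =
      ν.real {0} * (v i - b) + (1 - ν.real {0}) * (winProb B v i b b * v i - b) := by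
  rw [expUtil, integral_eq_of_measure_compl_singleton_eq_zero hμ,
    integral_eq_of_measure_compl_pair_eq_zero hb.ne hν, payoff_of_lt hb, payoff]

theorem IsNash.integral_payoff_le (hN : IsNash B v F) (hx : x ∈ Icc 0 (B i)) :
    ∫ y, payoff B v i x y ∂F (1 - i) ≤ expUtil B v i (F i) (F (1 - i)) := by
  have := hN.2 i (Measure.dirac x) ⟨inferInstance, Measure.dirac_apply_of_mem hx⟩
  rwa [expUtil, integral_dirac] at this

theorem IsNash.payoff_le_of_pure (hN : IsNash B v F) (hFo : F (1 - i) {b}ᶜ = 0)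
    (hx : x ∈ Icc 0 (B i)) : payoff B v i x b ≤ expUtil B v i (F i) (F (1 - i)) := by
  have := (hN.1 (1 - i)).1
  simpa only [integral_eq_of_measure_compl_singleton_eq_zero hFo] using hN.integral_payoff_le hx

theorem IsNash.supp_subset_of_pure (hN : IsNash B v F) (hv : 0 ≤ v i)
    (hFo : F (1 - i) {b}ᶜ = 0) :
    supp (F i) ⊆ {x ∈ Icc 0 (B i) | payoff B v i x b = expUtil B v i (F i) (F (1 - i))} := by
  have := (hN.1 i).1
  have := (hN.1 (1 - i)).1
  set U := expUtil B v i (F i) (F (1 - i))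
  have hU : U = ∫ x, payoff B v i x b ∂F i := expUtil_eq_of_pure hFo
  have hfin : {x ∈ Icc 0 (B i) | payoff B v i x b = U}.Finite :=
    (toFinite {-U, b, v i - U}).subset fun _ hx => setOf_payoff_eq_subset hx.2
  rw [supp_eq_support, ← hfin.isClosed.closure_eq, hU]
  exact support_subset_closure_setOf_eq_integral (hN.1 i).ae_mem
    ((hN.1 i).integrable_payoff_left hv) fun z hz => hU ▸ hN.payoff_le_of_pure hFo hz

theorem IsNash.supp_eq_pair_of_pure (hN : IsNash B v F) (hv : 0 ≤ v i) (hb : 0 ≤ b)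
    (hFo : F (1 - i) {b}ᶜ = 0) (hx : x ∈ supp (F i)) (hy : y ∈ supp (F i)) (hxy : x < y) :
    supp (F i) = {0, b} ∧ 0 < b ∧ expUtil B v i (F i) (F (1 - i)) = 0 ∧
      winProb B v i b b * v i = b := by
  have hsub := hN.supp_subset_of_pure hv hFo
  have hpair (z) (hz : z ∈ supp (F i)) : z = 0 ∨ z = b :=
    eq_zero_or_eq_of_payoff_eq_max hv hb (fun _ hw => hN.payoff_le_of_pure hFo hw)
      (hsub hz).1 (hsub hz).2
  obtain ⟨rfl, rfl⟩ : x = 0 ∧ y = b := by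
    rcases hpair x hx with rfl | rfl <;> rcases hpair y hy with rfl | rfl <;>
      first | exact ⟨rfl, rfl⟩ | linarith
  have hU : expUtil B v i (F i) (F (1 - i)) = 0 := by
    have h0 := (hsub hx).2
    rw [payoff_of_gt hxy] at h0
    linarith
  refine ⟨subset_antisymm hpair ?_, hxy, hU, ?_⟩
  · rintro z (rfl | rfl)
    exacts [hx, hy]
  · have hb' := (hsub hy).2
    rw [hU, payoff] at hb'
    linarith

theorem IsNash.le_expUtil_of_pair (hN : IsNash B v F) (hb : 0 < b) (hbB : b ≤ B i)
    (hFo : F (1 - i) {0, b}ᶜ = 0) :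
    (F (1 - i)).real {0} * v i ≤ expUtil B v i (F i) (F (1 - i)) := by
  have := (hN.1 (1 - i)).1
  refine le_of_forall_pos_le_add fun ε hε => ?_
  -- a bid in `(0, b)` wins exactly against the atom of `F (1 - i)` at `0`
  have hz : 0 < min ε (b / 2) := lt_min hε (by linarith)
  have hzb : min ε (b / 2) < b := (min_le_right _ _).trans_lt (by linarith)
  have := hN.integral_payoff_le (i := i) ⟨hz.le, hzb.le.trans hbB⟩
  rw [integral_eq_of_measure_compl_pair_eq_zero hb.ne hFo, payoff_of_lt hz,
    payoff_of_gt hzb] at this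
  nlinarith [min_le_left ε (b / 2)]

end Auction

theorem one_sided_randomization_general (B v : Fin 2 → ℝ)
    (hv : ∀ i, 0 < v i) (F : Fin 2 → Measure ℝ) (hN : IsNash B v F) (i : Fin 2)
    (hi : sInf (supp (F i)) < sSup (supp (F i)))
    (ho : sInf (supp (F (1 - i))) = sSup (supp (F (1 - i)))) :
    supp (F i) = ({0, Lval B v} : Set ℝ) ∧
    (F i {0}).toReal ≤ 1 - 2 * Lval B v / v (1 - i) ∧
    expUtil B v i (F i) (F (1 - i)) = 0 ∧
    expUtil B v (1 - i) (F (1 - i)) (F i) ≤ v (1 - i) - 2 * Lval B v := by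
  have := (hN.1 i).1
  have := (hN.1 (1 - i)).1
  set b := sInf (supp (F (1 - i)))
  have hbo := (hN.1 (1 - i)).supp_eq_singleton_of_csInf_eq_csSup ho
  have hbB : b ∈ Icc 0 (B (1 - i)) := (hN.1 (1 - i)).supp_subset (hbo ▸ rfl)
  have hFo : F (1 - i) {b}ᶜ = 0 := measure_compl_of_supp_eq hbo
  obtain ⟨x, hx, y, hy, hxy⟩ := (hN.1 i).supp_nonempty.exists_lt_of_csInf_lt_csSup hi
  obtain ⟨hsupp, hb, hU, htie⟩ := hN.supp_eq_pair_of_pure (hv i).le hbB.1 hFo hx hy hxy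
  have hFi : F i {0, b}ᶜ = 0 := measure_compl_of_supp_eq hsupp
  have hUo := expUtil_eq_of_pure_of_pair (B := B) (v := v) (i := 1 - i) hb hFo hFi
  have hdev := hN.le_expUtil_of_pair (i := 1 - i) hb hbB.2 (by rwa [sub_sub_cancel])
  rw [sub_sub_cancel, hUo, winProb_swap] at hdev
  have hw : winProb B v i b b = 1 / 2 :=
    winProb_self_eq_half (fun h => by simp [h] at htie; linarith)
      (fun h => by simp [h] at hdev; nlinarith)
  rw [hw] at htie hdev
  have hα : 0 ≤ (F i).real {0} := measureReal_nonneg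
  have hβ : 2 * b ≤ (1 - (F i).real {0}) * v (1 - i) := by linarith
  have hBi : B i ≤ b :=
    budget_le_of_payoff_le hbB.1 (fun z hz => hU ▸ hN.payoff_le_of_pure hFo hz) (by linarith)
  have hL : Lval B v = b :=
    le_antisymm (Lval_le_budget.trans hBi) (le_Lval ((hN.1 i).supp_subset (hsupp ▸ Or.inr rfl)).2
      (by linarith) hbB.2 (by nlinarith [hv (1 - i)]))
  refine ⟨hL ▸ hsupp, ?_, hU, ?_⟩
  · rwa [hL, le_sub_iff_add_le, ← le_sub_iff_add_le', div_le_iff₀ (hv (1 - i))]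
  · rw [hL, hUo, winProb_swap, hw]
    nlinarith

/-- In a Nash equilibrium, if player `i` randomizes (the infimum of his support is
below its supremum) while the opponent `1 - i` does not, then `Supp(Fᵢ) = {0, L}`,
player `i` puts mass at most `1 - 2L/v_{3-i}` on the bid `0`, player `i`'s expected
equilibrium utility is `0`, and the opponent's expected equilibrium utility is at
most `v_{3-i} - 2L`. -/
theorem one_sided_randomization (B v : Fin 2 → ℝ) (hB : ∀ i, 0 ≤ B i)
    (hv : ∀ i, 0 < v i) (F : Fin 2 → Measure ℝ) (hN : IsNash B v F) (i : Fin 2)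
    (hi : sInf (supp (F i)) < sSup (supp (F i)))
    (ho : sInf (supp (F (1 - i))) = sSup (supp (F (1 - i)))) :
    supp (F i) = ({0, Lval B v} : Set ℝ) ∧
    (F i {0}).toReal ≤ 1 - 2 * Lval B v / v (1 - i) ∧
    expUtil B v i (F i) (F (1 - i)) = 0 ∧
    expUtil B v (1 - i) (F (1 - i)) (F i) ≤ v (1 - i) - 2 * Lval B v :=
  one_sided_randomization_general B v hv F hN i hi ho
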